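/- Assume J is generated as an A-module by a family {j_μ}_{μ∈M} and J' is generated as an A-module by a family {j'_ν}_{ν∈N}. Then there is a surjective ring homomorphism from the polynomial ring A[{x_μ}_{μ∈M}, {x'_ν}_{ν∈N}] onto A ⋈^{f,g}(J,J'), namely the A-algebra map (via a ↦ (f(a), g(a))) sending x_μ ↦ (j_μ, 0) and x'_ν ↦ (0, j'_ν); in particular A ⋈^{f,g}(J,J') is a homomorphic image of a polynomial ring over A. -/

import Mathlib

open IsLocalRing

variable {A B C : Type} [CommRing A] [CommRing B] [CommRing C]

def BiAmalg (f : A →+* B) (g : A →+* C) (J : Ideal B) (J' : Ideal C) :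
    Subring (B × C) where
  carrier := {x | ∃ a : A, ∃ j ∈ J, ∃ j' ∈ J', x = (f a + j, g a + j')}
  zero_mem' := ⟨0, 0, J.zero_mem, 0, J'.zero_mem, by simp; rfl⟩
  one_mem' := ⟨1, 0, J.zero_mem, 0, J'.zero_mem, by simp; rfl⟩
  add_mem' := by
    rintro x y ⟨a, j, hj, j', hj', rfl⟩ ⟨b, k, hk, k', hk', rfl⟩
    exact ⟨a + b, j + k, J.add_mem hj hk, j' + k', J'.add_mem hj' hk', by
      simp only [Prod.mk_add_mk, map_add, Prod.mk.injEq]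
      constructor <;> ring⟩
  neg_mem' := by
    rintro x ⟨a, j, hj, j', hj', rfl⟩
    exact ⟨-a, -j, J.neg_mem hj, -j', J'.neg_mem hj', by
      simp only [Prod.neg_mk, map_neg, Prod.mk.injEq]
      constructor <;> ring⟩
  mul_mem' := by
    rintro x y ⟨a, j, hj, j', hj', rfl⟩ ⟨b, k, hk, k', hk', rfl⟩
    exact ⟨a * b, f a * k + j * f b + j * k,
      J.add_mem (J.add_mem (J.mul_mem_left _ hk) (J.mul_mem_right _ hj)) (J.mul_mem_right _ hj),
      g a * k' + j' * g b + j' * k',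
      J'.add_mem (J'.add_mem (J'.mul_mem_left _ hk') (J'.mul_mem_right _ hj'))
        (J'.mul_mem_right _ hj'), by
      simp only [Prod.mk_mul_mk, map_mul, Prod.mk.injEq]
      constructor <;> ring⟩

theorem BiAmalg.mem_mk (f : A →+* B) (g : A →+* C) (J : Ideal B) (J' : Ideal C)
    (a : A) {j : B} (hj : j ∈ J) {j' : C} (hj' : j' ∈ J') :
    (f a + j, g a + j') ∈ BiAmalg f g J J' :=
  ⟨a, j, hj, j', hj', rfl⟩

def BiAmalg.incl (f : A →+* B) (g : A →+* C) (J : Ideal B) (J' : Ideal C) :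
    A →+* BiAmalg f g J J' where
  toFun a := ⟨(f a, g a), a, 0, J.zero_mem, 0, J'.zero_mem, by simp⟩
  map_one' := Subtype.ext (by simp)
  map_mul' x y := Subtype.ext (by simp [Prod.mk_mul_mk])
  map_zero' := Subtype.ext (by simp)
  map_add' x y := Subtype.ext (by simp [Prod.mk_add_mk])

instance BiAmalg.moduleA (f : A →+* B) (g : A →+* C) (J : Ideal B) (J' : Ideal C) :
    Module A (BiAmalg f g J J') :=
  Module.compHom _ (BiAmalg.incl f g J J')

/-
An element of `A ⋈^{f,g}(J,J')` is `(f a, g a) + (j, 0) + (0, j')`. The first summand is a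
scalar, and `j ↦ (j, 0)`, `j' ↦ (0, j')` are `A`-linear, so they carry the `A`-spans of the
generators, i.e. all of `J` and `J'`, into the `A`-span of the images of the variables, which
lies in the `A`-subalgebra they generate: the range of the evaluation map.
-/

theorem LinearMap.apply_mem_adjoin_image {R M S : Type*} [CommSemiring R] [AddCommMonoid M]
    [Module R M] [Semiring S] [Algebra R S] (φ : M →ₗ[R] S) {s : Set M}
    (hs : Submodule.span R s = ⊤) (m : M) : φ m ∈ Algebra.adjoin R (φ '' s) := by
  apply Algebra.span_le_adjoin R
  rw [← Submodule.map_span, hs]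
  exact Submodule.mem_map_of_mem Submodule.mem_top

namespace BiAmalg

variable (f : A →+* B) (g : A →+* C) (J : Ideal B) (J' : Ideal C)

instance algebra : Algebra A (BiAmalg f g J J') where
  algebraMap := incl f g J J'
  smul_def' _ _ := rfl
  commutes' _ _ := mul_comm _ _

@[simp]
theorem coe_algebraMap (a : A) : (algebraMap A (BiAmalg f g J J') a : B × C) = (f a, g a) := rfl

@[simp]
theorem coe_smul (a : A) (x : BiAmalg f g J J') :
    ((a • x : BiAmalg f g J J') : B × C) = (f a, g a) * x :=
  rfl

def inl : letI := Module.compHom J f; J →ₗ[A] BiAmalg f g J J' :=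
  letI := Module.compHom J f
  { toFun j := ⟨((j : B), 0), 0, j, j.2, 0, J'.zero_mem, by simp⟩
    map_add' _ _ := Subtype.ext (by simp)
    map_smul' _ _ := Subtype.ext (by simp; rfl) }

def inr : letI := Module.compHom J' g; J' →ₗ[A] BiAmalg f g J J' :=
  letI := Module.compHom J' g
  { toFun j' := ⟨(0, (j' : C)), 0, 0, J.zero_mem, j', j'.2, by simp⟩
    map_add' _ _ := Subtype.ext (by simp)
    map_smul' _ _ := Subtype.ext (by simp; rfl) }

theorem eq_algebraMap_add_inl_add_inr (x : BiAmalg f g J J') :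
    ∃ (a : A) (j : J) (j' : J'), x = algebraMap A _ a + inl f g J J' j + inr f g J J' j' := by
  obtain ⟨x, a, j, hj, j', hj', rfl⟩ := x
  exact ⟨a, ⟨j, hj⟩, ⟨j', hj'⟩, Subtype.ext (by simp [inl, inr])⟩

theorem adjoin_range_inl_inr_eq_top {M N : Type*} (jf : M → J) (j'f : N → J')
    (hJ : letI := Module.compHom J f; Submodule.span A (Set.range jf) = ⊤)
    (hJ' : letI := Module.compHom J' g; Submodule.span A (Set.range j'f) = ⊤) :
    Algebra.adjoin A (Set.range (Sum.elim (inl f g J J' ∘ jf) (inr f g J J' ∘ j'f))) = ⊤ := by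
  let := Module.compHom J f
  let := Module.compHom J' g
  rw [Set.Sum.elim_range, Set.range_comp, Set.range_comp]
  refine eq_top_iff.2 fun x _ => ?_
  obtain ⟨a, j, j', rfl⟩ := eq_algebraMap_add_inl_add_inr f g J J' x
  refine add_mem (add_mem (Subalgebra.algebraMap_mem _ a) ?_) ?_
  · exact Algebra.adjoin_mono Set.subset_union_left ((inl f g J J').apply_mem_adjoin_image hJ j)
  · exact Algebra.adjoin_mono Set.subset_union_right ((inr f g J J').apply_mem_adjoin_image hJ' j')

end BiAmalg

/-- If `J` is generated as an `A`-module by `{j_μ}_{μ ∈ M}` and `J'` by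
`{j'_ν}_{ν ∈ N}`, then the `A`-algebra map `A[{x_μ}, {x'_ν}] → A ⋈^{f,g} (J, J')` sending
`x_μ ↦ (j_μ, 0)` and `x'_ν ↦ (0, j'_ν)` is surjective; in particular the bi-amalgamation is a
homomorphic image of a polynomial ring over `A`. -/
theorem biAmalg_surjective_of_polynomial (f : A →+* B) (g : A →+* C) (J : Ideal B) (J' : Ideal C)
    {M N : Type} (jf : M → J) (j'f : N → J') :
    letI : Module A J := Module.compHom _ f
    letI : Module A J' := Module.compHom _ g
    Submodule.span A (Set.range jf) = ⊤ →
    Submodule.span A (Set.range j'f) = ⊤ →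
    Function.Surjective
      (MvPolynomial.eval₂Hom (BiAmalg.incl f g J J')
        (Sum.elim
          (fun μ => (⟨((jf μ : B), 0),
            ⟨0, jf μ, (jf μ).2, 0, J'.zero_mem, by simp⟩⟩ : BiAmalg f g J J'))
          (fun ν => (⟨(0, (j'f ν : C)),
            ⟨0, 0, J.zero_mem, j'f ν, (j'f ν).2, by simp⟩⟩ : BiAmalg f g J J')))) := by
  intro hJ hJ'
  have hrange := BiAmalg.adjoin_range_inl_inr_eq_top f g J J' jf j'f hJ hJ'
  rw [← MvPolynomial.aeval_range, AlgHom.range_eq_top] at hrange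
  exact hrange
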